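/- Let Q_A be a finite quiver, α: e_1 → e_2 and β: e_{n−1} → e_n two arrows with pairwise distinct endpoints, and Q_B the quiver obtained by gluing α and β. Let φ: Q_A → Q_B be the induced quiver morphism. For each n ≥ 2, the induced map φ_n from directed paths of length n in Q_A to directed paths of length n in Q_B is injective. -/

import Mathlib

/-- A finite quiver: finite vertex and arrow sets with source and target maps. -/
structure FinQuiver where
  V : Type
  E : Type
  [fintV : Fintype V]
  [fintE : Fintype E]
  [decV : DecidableEq V]
  [decE : DecidableEq E]
  s : E → V
  t : E → V

attribute [instance] FinQuiver.fintV FinQuiver.fintE FinQuiver.decV FinQuiver.decE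

namespace FinQuiver

/-- Two vertices are related if some arrow goes from the first to the second. -/
def adj (Q : FinQuiver) (u v : Q.V) : Prop := ∃ e : Q.E, Q.s e = u ∧ Q.t e = v

/-- Being in the same connected component of the underlying undirected graph. -/
def ccRel (Q : FinQuiver) : Q.V → Q.V → Prop := Relation.EqvGen Q.adj

/-- The number of connected components of the underlying graph of `Q`. -/
noncomputable def numComponents (Q : FinQuiver) : ℕ := Nat.card (Quot Q.ccRel)

/-- The first Betti number `χ(Q) = |Q₁| - |Q₀| + c`. -/
noncomputable def betti (Q : FinQuiver) : ℤ :=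
  (Fintype.card Q.E : ℤ) - (Fintype.card Q.V : ℤ) + (Q.numComponents : ℤ)

/-- The quiver obtained from `Q` by gluing the arrow `β` onto the arrow `α`:
`s β` is identified with `s α`, `t β` with `t α`, and `β` with `α`. -/
def glue (Q : FinQuiver) (α β : Q.E) (h1 : Q.s α ≠ Q.s β) (h2 : Q.s α ≠ Q.t β)
    (h3 : Q.t α ≠ Q.s β) (h4 : Q.t α ≠ Q.t β) : FinQuiver where
  V := {v : Q.V // v ≠ Q.s β ∧ v ≠ Q.t β}
  E := {e : Q.E // e ≠ β}
  s := fun e =>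
    if hs : Q.s e.1 = Q.s β then ⟨Q.s α, h1, h2⟩
    else if ht : Q.s e.1 = Q.t β then ⟨Q.t α, h3, h4⟩
    else ⟨Q.s e.1, hs, ht⟩
  t := fun e =>
    if hs : Q.t e.1 = Q.s β then ⟨Q.s α, h1, h2⟩
    else if ht : Q.t e.1 = Q.t β then ⟨Q.t α, h3, h4⟩
    else ⟨Q.t e.1, hs, ht⟩

/-- The canonical map on vertices induced by gluing. -/
def glueVMap (Q : FinQuiver) (α β : Q.E) (h1 : Q.s α ≠ Q.s β) (h2 : Q.s α ≠ Q.t β)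
    (h3 : Q.t α ≠ Q.s β) (h4 : Q.t α ≠ Q.t β) :
    Q.V → (Q.glue α β h1 h2 h3 h4).V := fun v =>
  if hs : v = Q.s β then ⟨Q.s α, h1, h2⟩
  else if ht : v = Q.t β then ⟨Q.t α, h3, h4⟩
  else ⟨v, hs, ht⟩

/-- The canonical map on arrows induced by gluing. -/
def glueEMap (Q : FinQuiver) (α β : Q.E) (h1 : Q.s α ≠ Q.s β) (h2 : Q.s α ≠ Q.t β)
    (h3 : Q.t α ≠ Q.s β) (h4 : Q.t α ≠ Q.t β) :
    Q.E → (Q.glue α β h1 h2 h3 h4).E := fun e =>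
  if he : e = β then ⟨α, fun hh => h1 (by rw [hh])⟩ else ⟨e, he⟩

/-- `α` is a source arrow: `s α` is a source vertex, and apart from `α` no arrow
starts at `s α` and no arrow ends at `t α`. -/
def IsSourceArrow (Q : FinQuiver) (α : Q.E) : Prop :=
  (∀ e : Q.E, Q.t e ≠ Q.s α) ∧ (∀ e : Q.E, e ≠ α → Q.s e ≠ Q.s α) ∧
    (∀ e : Q.E, e ≠ α → Q.t e ≠ Q.t α)

/-- `β` is a sink arrow: `t β` is a sink vertex, and apart from `β` no arrow
starts at `s β` and no arrow ends at `t β`. -/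
def IsSinkArrow (Q : FinQuiver) (β : Q.E) : Prop :=
  (∀ e : Q.E, Q.s e ≠ Q.t β) ∧ (∀ e : Q.E, e ≠ β → Q.s e ≠ Q.s β) ∧
    (∀ e : Q.E, e ≠ β → Q.t e ≠ Q.t β)

/-- A list of arrows is a directed path if consecutive arrows are composable. -/
def IsPath (Q : FinQuiver) (l : List Q.E) : Prop :=
  l.Chain' (fun a b => Q.t a = Q.s b)

/-- A function `Fin n → Q.E` is a directed path if consecutive arrows compose. -/
def IsPathFun (Q : FinQuiver) {n : ℕ} (p : Fin n → Q.E) : Prop :=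
  ∀ i j : Fin n, (j : ℕ) = (i : ℕ) + 1 → Q.t (p i) = Q.s (p j)

/-- The type of directed paths of length `n` from `u` to `v` (for `n ≥ 1`). -/
def PathN (Q : FinQuiver) (n : ℕ) (u v : Q.V) : Type :=
  {p : Fin n → Q.E // Q.IsPathFun p ∧
    ∀ h : 0 < n, Q.s (p ⟨0, h⟩) = u ∧ Q.t (p ⟨n - 1, by omega⟩) = v}

/-- The number of pairs `(a, p)` where `a` is an arrow and `p` is a directed path of
length `n` parallel to `a`, i.e. `|Qₙ ∥ Q₁|`. -/
noncomputable def parArrowCount (Q : FinQuiver) (n : ℕ) : ℕ :=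
  Nat.card ((a : Q.E) × Q.PathN n (Q.s a) (Q.t a))

/-- The number of oriented cycles of length `n`, i.e. `|Qₙ ∥ Q₀|` (for `n ≥ 1`). -/
noncomputable def cycleCount (Q : FinQuiver) (n : ℕ) : ℕ :=
  Nat.card ((v : Q.V) × Q.PathN n v v)

end FinQuiver

/-- The quiver with two vertices `false, true`, one arrow `false → true` (`γ`) and
`m` arrows `true → false` (`δ₁, …, δₘ`). -/
def kroQ (m : ℕ) : FinQuiver where
  V := Bool
  E := Option (Fin m)
  s := fun e => e.isSome
  t := fun e => !e.isSome

/-- The zig-zag quiver with `2*n` vertices `0, …, 2n-1` and `2n-1` arrows, the `j`-th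
arrow going `j → j+1` if `j` is even and `j+1 → j` if `j` is odd. -/
def zigzag (n : ℕ) : FinQuiver where
  V := Fin (2 * n)
  E := Fin (2 * n - 1)
  s := fun j => if (j : ℕ) % 2 = 0 then ⟨j, by omega⟩ else ⟨(j : ℕ) + 1, by omega⟩
  t := fun j => if (j : ℕ) % 2 = 0 then ⟨(j : ℕ) + 1, by omega⟩ else ⟨j, by omega⟩

namespace FinQuiver

variable {Q : FinQuiver} {α β : Q.E} {h1 : Q.s α ≠ Q.s β} {h2 : Q.s α ≠ Q.t β}
  {h3 : Q.t α ≠ Q.s β} {h4 : Q.t α ≠ Q.t β}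

theorem val_glueEMap (e : Q.E) :
    (Q.glueEMap α β h1 h2 h3 h4 e).1 = if e = β then α else e := by
  by_cases he : e = β <;> simp [glueEMap, he]

theorem glueEMap_eq_glueEMap_iff {a b : Q.E} :
    Q.glueEMap α β h1 h2 h3 h4 a = Q.glueEMap α β h1 h2 h3 h4 b ↔
      a = b ∨ (a = α ∧ b = β) ∨ (a = β ∧ b = α) := by
  refine Subtype.val_inj.symm.trans ?_
  rw [val_glueEMap, val_glueEMap]
  split_ifs <;> grind

theorem glueEMap_ne_of_source_eq_target (h0 : Q.s α ≠ Q.t α) {a b : Q.E}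
    (ha : Q.s a = Q.t α) (hb : Q.s b = Q.t β) :
    Q.glueEMap α β h1 h2 h3 h4 a ≠ Q.glueEMap α β h1 h2 h3 h4 b := by
  intro hab
  rcases glueEMap_eq_glueEMap_iff.1 hab with rfl | ⟨rfl, rfl⟩ | ⟨rfl, rfl⟩
  · exact h4 (ha.symm.trans hb)
  · exact h0 ha
  · exact h3 ha.symm

theorem glueEMap_ne_of_target_eq_source (h0 : Q.s α ≠ Q.t α) {a b : Q.E}
    (ha : Q.t a = Q.s α) (hb : Q.t b = Q.s β) :
    Q.glueEMap α β h1 h2 h3 h4 a ≠ Q.glueEMap α β h1 h2 h3 h4 b := by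
  intro hab
  rcases glueEMap_eq_glueEMap_iff.1 hab with rfl | ⟨rfl, rfl⟩ | ⟨rfl, rfl⟩
  · exact h1 (ha.symm.trans hb)
  · exact h0 ha.symm
  · exact h2 ha.symm

/-- A neighbouring arrow, which exists since `n ≥ 2`, would have to identify distinct endpoints
of `α` and `β`. -/
theorem glueEMap_path_not_alpha_beta (h0 : Q.s α ≠ Q.t α) {n : ℕ} (hn : 2 ≤ n)
    {p q : Fin n → Q.E} (hp : Q.IsPathFun p) (hq : Q.IsPathFun q)
    (h : ∀ i, Q.glueEMap α β h1 h2 h3 h4 (p i) = Q.glueEMap α β h1 h2 h3 h4 (q i))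
    (i : Fin n) (hpi : p i = α) (hqi : q i = β) : False := by
  by_cases hlast : (i : ℕ) + 1 < n
  · let j : Fin n := ⟨i + 1, hlast⟩
    refine glueEMap_ne_of_source_eq_target h0 ?_ ?_ (h j)
    · rw [← hp i j rfl, hpi]
    · rw [← hq i j rfl, hqi]
  · let j : Fin n := ⟨i - 1, by omega⟩
    have hji : (i : ℕ) = j + 1 := by simp only [j]; omega
    refine glueEMap_ne_of_target_eq_source h0 ?_ ?_ (h j)
    · rw [hp j i hji, hpi]
    · rw [hq j i hji, hqi]

end FinQuiver

theorem glue_path_map_injective_general (Q : FinQuiver) (α β : Q.E)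
    (h0 : Q.s α ≠ Q.t α) (h1 : Q.s α ≠ Q.s β) (h2 : Q.s α ≠ Q.t β)
    (h3 : Q.t α ≠ Q.s β) (h4 : Q.t α ≠ Q.t β)
    (n : ℕ) (hn : 2 ≤ n) (p q : Fin n → Q.E)
    (hp : Q.IsPathFun p) (hq : Q.IsPathFun q)
    (h : ∀ i, Q.glueEMap α β h1 h2 h3 h4 (p i) = Q.glueEMap α β h1 h2 h3 h4 (q i)) :
    p = q := by
  funext i
  rcases FinQuiver.glueEMap_eq_glueEMap_iff.1 (h i) with hpq | ⟨hpi, hqi⟩ | ⟨hpi, hqi⟩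
  · exact hpq
  · exact (FinQuiver.glueEMap_path_not_alpha_beta h0 hn hp hq h i hpi hqi).elim
  · exact (FinQuiver.glueEMap_path_not_alpha_beta h0 hn hq hp (fun j => (h j).symm) i hqi hpi).elim

/-- When gluing two arrows with pairwise distinct endpoints, the induced map on
directed paths of length `n ≥ 2` is injective. -/
theorem glue_path_map_injective (Q : FinQuiver) (α β : Q.E)
    (h0 : Q.s α ≠ Q.t α) (h1 : Q.s α ≠ Q.s β) (h2 : Q.s α ≠ Q.t β)
    (h3 : Q.t α ≠ Q.s β) (h4 : Q.t α ≠ Q.t β) (h5 : Q.s β ≠ Q.t β)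
    (n : ℕ) (hn : 2 ≤ n) (p q : Fin n → Q.E)
    (hp : Q.IsPathFun p) (hq : Q.IsPathFun q)
    (h : ∀ i, Q.glueEMap α β h1 h2 h3 h4 (p i) = Q.glueEMap α β h1 h2 h3 h4 (q i)) :
    p = q :=
  glue_path_map_injective_general Q α β h0 h1 h2 h3 h4 n hn p q hp hq h
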